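/- Let q ∈ ℂ, q ≠ 0, and let α, β ∈ ℂ((x)) be nonzero with ν₀(α) ≠ 0, where ν₀ denotes the x-adic valuation. Define β_n = ∑_{k=0}^{n-1}(−α σ_q)ᵏ β. Then β_n ≠ 0 for all n ≥ 1; more precisely ν₀(β_n) = ν₀(β) if ν₀(α) > 0, and ν₀(β_n) = (n−1)ν₀(α) + ν₀(β) if ν₀(α) < 0. -/

import Mathlib

noncomputable section

/-- The `q`-dilation operator `σ_q` on formal Laurent series: `(σ_q f)(x) = f(qx)`,
i.e. the coefficient of `xⁿ` is multiplied by `qⁿ`. -/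
def sigmaq (q : ℂ) (f : LaurentSeries ℂ) : LaurentSeries ℂ :=
  ⟨fun n => q ^ n * f.coeff n,
    f.isPWO_support'.mono (by
      intro n hn
      simp only [Function.mem_support] at hn ⊢
      exact fun h => hn (by rw [h, mul_zero]))⟩

/-- `β_n = ∑_{k=0}^{n-1} (−α σ_q)ᵏ β` (so `β₀ = 0`). -/
def betaN (q : ℂ) (α β : LaurentSeries ℂ) (n : ℕ) : LaurentSeries ℂ :=
  ∑ k ∈ Finset.range n, (fun g => -α * sigmaq q g)^[k] β

lemma sigmaq_coeff (q : ℂ) (f : LaurentSeries ℂ) (n : ℤ) :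
    (sigmaq q f).coeff n = q ^ n * f.coeff n := rfl

lemma order_eq_of_coeff (f : LaurentSeries ℂ) (d : ℤ)
    (h1 : f.coeff d ≠ 0) (h2 : ∀ i < d, f.coeff i = 0) : f ≠ 0 ∧ f.order = d := by
  have hf : f ≠ 0 := fun h => h1 (by simp [h])
  refine ⟨hf, le_antisymm (HahnSeries.order_le_of_coeff_ne_zero h1) ?_⟩
  by_contra h
  exact (HahnSeries.coeff_order_eq_zero.not.mpr hf) (h2 _ (lt_of_not_ge h))

lemma sigmaq_order (q : ℂ) (hq : q ≠ 0) (f : LaurentSeries ℂ) (hf : f ≠ 0) :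
    sigmaq q f ≠ 0 ∧ (sigmaq q f).order = f.order := by
  refine order_eq_of_coeff _ _ ?_ ?_
  · exact mul_ne_zero (zpow_ne_zero _ hq) ((HahnSeries.coeff_order_eq_zero.not.mpr hf))
  · intro i hi
    rw [sigmaq_coeff, HahnSeries.coeff_eq_zero_of_lt_order hi, mul_zero]

lemma iter_order (q : ℂ) (hq : q ≠ 0) (α β : LaurentSeries ℂ)
    (hα : α ≠ 0) (hβ : β ≠ 0) (k : ℕ) :
    (fun g => -α * sigmaq q g)^[k] β ≠ 0 ∧
      ((fun g => -α * sigmaq q g)^[k] β).order = k * α.order + β.order := by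
  induction k with
  | zero => exact ⟨hβ, by simp⟩
  | succ k ih =>
    obtain ⟨h0, hord⟩ := ih
    rw [Function.iterate_succ_apply']
    obtain ⟨hs0, hsord⟩ := sigmaq_order q hq _ h0
    have hne : -α * sigmaq q ((fun g => -α * sigmaq q g)^[k] β) ≠ 0 :=
      mul_ne_zero (neg_ne_zero.mpr hα) hs0
    refine ⟨hne, ?_⟩
    rw [HahnSeries.order_mul (neg_ne_zero.mpr hα) hs0, HahnSeries.order_neg, hsord, hord]
    push_cast
    ring

lemma coeff_sum {s : Finset ℕ} {f : ℕ → LaurentSeries ℂ} {i : ℤ} :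
    (∑ k ∈ s, f k).coeff i = ∑ k ∈ s, (f k).coeff i := by
  classical
  induction s using Finset.induction with
  | empty => simp
  | insert _ _ h ih => simp [Finset.sum_insert h, ih]

/-- If `ν₀(α) ≠ 0` then `β_n ≠ 0` for all `n ≥ 1`; more precisely
`ν₀(β_n) = ν₀(β)` if `ν₀(α) > 0`, and `ν₀(β_n) = (n−1)ν₀(α) + ν₀(β)` if `ν₀(α) < 0`. -/
theorem betaN_order (q : ℂ) (hq : q ≠ 0) (α β : LaurentSeries ℂ)
    (hα : α ≠ 0) (hβ : β ≠ 0) (hαord : α.order ≠ 0) (n : ℕ) (hn : 1 ≤ n) :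
    betaN q α β n ≠ 0 ∧
      (0 < α.order → (betaN q α β n).order = β.order) ∧
      (α.order < 0 → (betaN q α β n).order = ((n : ℤ) - 1) * α.order + β.order) := by
  rcases lt_or_gt_of_ne hαord with hneg | hpos
  · -- α.order < 0 : dominant term is k = n-1, order (n-1)d + e
    have key : betaN q α β n ≠ 0 ∧
        (betaN q α β n).order = ((n : ℤ) - 1) * α.order + β.order := by
      apply order_eq_of_coeff
      · rw [betaN, coeff_sum]
        rw [Finset.sum_eq_single (n - 1)]
        · obtain ⟨h0, hord⟩ := iter_order q hq α β hα hβ (n - 1)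
          have : ((n : ℤ) - 1) * α.order + β.order =
              ((n - 1 : ℕ) : ℤ) * α.order + β.order := by
            congr 1
            congr 1
            omega
          rw [this, ← hord]
          exact (HahnSeries.coeff_order_eq_zero.not.mpr h0)
        · intro k hk hkne
          obtain ⟨h0, hord⟩ := iter_order q hq α β hα hβ k
          apply HahnSeries.coeff_eq_zero_of_lt_order
          rw [hord]
          have hkn : k < n := Finset.mem_range.mp hk
          have hkle : (k : ℤ) < (n : ℤ) - 1 := by omega
          nlinarith [mul_lt_mul_of_neg_right hkle hneg]
        · intro h
          exact absurd (Finset.mem_range.mpr (by omega : n - 1 < n)) h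
      · intro i hi
        rw [betaN, coeff_sum]
        apply Finset.sum_eq_zero
        intro k hk
        obtain ⟨h0, hord⟩ := iter_order q hq α β hα hβ k
        apply HahnSeries.coeff_eq_zero_of_lt_order
        rw [hord]
        refine lt_of_lt_of_le hi ?_
        have hk' : (k : ℤ) ≤ (n : ℤ) - 1 := by
          have := Finset.mem_range.mp hk; omega
        nlinarith [mul_le_mul_of_nonpos_right hk' (le_of_lt hneg)]
    exact ⟨key.1, fun h => absurd h (not_lt.mpr hneg.le), fun _ => key.2⟩
  · -- 0 < α.order : dominant term is k = 0, order e
    have key : betaN q α β n ≠ 0 ∧ (betaN q α β n).order = β.order := by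
      apply order_eq_of_coeff
      · rw [betaN, coeff_sum]
        rw [Finset.sum_eq_single 0]
        · simpa using (HahnSeries.coeff_order_eq_zero.not.mpr hβ)
        · intro k hk hkne
          obtain ⟨h0, hord⟩ := iter_order q hq α β hα hβ k
          apply HahnSeries.coeff_eq_zero_of_lt_order
          rw [hord]
          have h1 : (0 : ℤ) < k := by omega
          nlinarith [mul_pos h1 hpos]
        · intro h
          exact absurd (Finset.mem_range.mpr (by omega)) h
      · intro i hi
        rw [betaN, coeff_sum]
        apply Finset.sum_eq_zero
        intro k hk
        obtain ⟨h0, hord⟩ := iter_order q hq α β hα hβ k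
        apply HahnSeries.coeff_eq_zero_of_lt_order
        rw [hord]
        have := mul_nonneg (Int.natCast_nonneg k) hpos.le
        linarith
    exact ⟨key.1, fun _ => key.2, fun h => absurd h (not_lt.mpr hpos.le)⟩

end
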